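/- Let H be a class of boolean functions on X with 0 < VC(H) = d < ∞ and let n ≥ d. Then the optimal agnostic transductive online regret satisfies R(H,n) ≥ (d·√(⌊n/d⌋))/(2√2) = Ω(√(dn)). -/

import Mathlib

/-!
Cycle through a shattered set `s` of size `d`, so that every point of `s` occurs at least
`k = ⌊n/d⌋` times, and draw the labels uniformly at random. Each label is a fair coin
independent of everything the learner has seen, so every learner makes `n/2` mistakes on
average. Since `s` is shattered, some `h ∈ H` predicts on each point the majority of the labels
it receives, and on a point occurring `m` times it makes `(m - |S_m|)/2` mistakes, where `S_m`
is the imbalance of `m` fair signs. Hence the average regret is `∑ E|S_m| / 2`, and Khinchine's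
inequality `E|S_m| ≥ √(m/2)` gives the bound. For equal weights Khinchine's inequality comes
from the exact value `E|S_m| = m·C(m-1, ⌊(m-1)/2⌋)/2^(m-1)` and a lower bound on central
binomial coefficients.
-/

open scoped Classical

/-- Expected number of mistakes of a randomized learner in the agnostic transductive
online game: `A x l` is the probability that the learner predicts `1` given the (known)
instance sequence `x` and the list `l` of previously revealed true labels. -/
noncomputable def expMistakes {X : Type*} {n : ℕ} (A : (Fin n → X) → List Bool → ℝ)
    (x : Fin n → X) (y : Fin n → Bool) : ℝ :=
  ∑ t : Fin n,
    (if y t then 1 - A x (List.ofFn (fun i : Fin t.1 => y ⟨i.1, i.2.trans t.2⟩))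
     else A x (List.ofFn (fun i : Fin t.1 => y ⟨i.1, i.2.trans t.2⟩)))

/-- Number of errors of hypothesis `h` on the labeled sequence `(x, y)`. -/
noncomputable def errCount {X : Type*} {n : ℕ} (x : Fin n → X) (y : Fin n → Bool)
    (h : X → Bool) : ℕ :=
  (Finset.univ.filter (fun t : Fin n => h (x t) ≠ y t)).card

/-- `H` shatters the finite set `s`. -/
def Shatters {X : Type*} (H : Set (X → Bool)) (s : Finset X) : Prop :=
  ∀ f : X → Bool, ∃ h ∈ H, ∀ a ∈ s, h a = f a

open Finset

lemma sixteen_pow_le_centralBinom_sq (m : ℕ) :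
    16 ^ (m + 1) ≤ 4 * (m + 1) * (m + 1).centralBinom ^ 2 := by
  induction m with
  | zero => decide
  | succ m ih =>
    have hrec := Nat.succ_mul_centralBinom_succ (m + 1)
    have hquad : 4 * (m + 1) * (m + 2) ≤ (2 * (m + 1) + 1) ^ 2 := by nlinarith
    refine Nat.le_of_mul_le_mul_left ?_ (show 0 < m + 1 + 1 by omega)
    calc (m + 1 + 1) * 16 ^ (m + 1 + 1) = 16 * (m + 2) * 16 ^ (m + 1) := by ring
      _ ≤ 16 * (m + 2) * (4 * (m + 1) * (m + 1).centralBinom ^ 2) := by gcongr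
      _ = 16 * (4 * (m + 1) * (m + 2)) * (m + 1).centralBinom ^ 2 := by ring
      _ ≤ 16 * (2 * (m + 1) + 1) ^ 2 * (m + 1).centralBinom ^ 2 := by gcongr
      _ = 4 * (2 * (2 * (m + 1) + 1) * (m + 1).centralBinom) ^ 2 := by ring
      _ = (m + 1 + 1) * (4 * (m + 1 + 1) * (m + 1 + 1).centralBinom ^ 2) := by
        rw [← hrec]; ring

lemma four_pow_le_choose_half_sq (K : ℕ) :
    4 ^ (K + 1) ≤ 8 * (K + 1) * K.choose (K / 2) ^ 2 := by
  obtain ⟨m, rfl | rfl⟩ := Nat.even_or_odd' K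
  · rcases m with _ | m
    · decide
    have h := sixteen_pow_le_centralBinom_sq m
    rw [show 2 * (m + 1) / 2 = m + 1 by omega, ← Nat.centralBinom_eq_two_mul_choose]
    calc 4 ^ (2 * (m + 1) + 1) = 4 * 16 ^ (m + 1) := by rw [pow_succ, pow_mul]; ring
      _ ≤ 4 * (4 * (m + 1) * (m + 1).centralBinom ^ 2) := by gcongr
      _ = 16 * (m + 1) * (m + 1).centralBinom ^ 2 := by ring
      _ ≤ 8 * (2 * (m + 1) + 1) * (m + 1).centralBinom ^ 2 :=
        Nat.mul_le_mul_right _ (by omega)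
  · have h := sixteen_pow_le_centralBinom_sq m
    have hcb : (m + 1).centralBinom = 2 * (2 * m + 1).choose m := by
      rw [Nat.centralBinom_eq_two_mul_choose, show 2 * (m + 1) = 2 * m + 1 + 1 by ring,
        Nat.choose_succ_succ', Nat.choose_symm_half]
      ring
    rw [show (2 * m + 1) / 2 = m by omega]
    calc 4 ^ (2 * m + 1 + 1) = 16 ^ (m + 1) := by
          rw [show 2 * m + 1 + 1 = 2 * (m + 1) by ring, pow_mul]; norm_num
      _ ≤ 4 * (m + 1) * (m + 1).centralBinom ^ 2 := h
      _ = 8 * (2 * m + 1 + 1) * (2 * m + 1).choose m ^ 2 := by rw [hcb]; ring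

lemma sum_range_choose_mul_sub_two_mul (K m : ℕ) :
    ∑ j ∈ range (m + 1), ((K + 1).choose j : ℝ) * (K + 1 - 2 * j) = (K + 1) * K.choose m := by
  induction m with
  | zero => simp
  | succ m ih =>
    rw [sum_range_succ, ih]
    have h1 := Nat.add_one_mul_choose_eq K m
    have h2 := Nat.choose_mul_succ_eq K (m + 1)
    rcases le_or_gt (m + 1) (K + 1) with hm | hm
    · have h1' : ((K + 1 : ℕ) : ℝ) * K.choose m = (K + 1).choose (m + 1) * (m + 1) := by
        exact_mod_cast h1
      have h2' : (K.choose (m + 1) : ℝ) * (K + 1) = (K + 1).choose (m + 1) * (K - m) := by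
        rw [show K + 1 - (m + 1) = K - m by omega] at h2
        have := congrArg (Nat.cast (R := ℝ)) h2
        push_cast [Nat.cast_sub (show m ≤ K by omega)] at this
        exact this
      push_cast at h1' ⊢
      linear_combination h1' - h2'
    · simp [Nat.choose_eq_zero_of_lt hm, Nat.choose_eq_zero_of_lt (by omega : K < m + 1),
        Nat.choose_eq_zero_of_lt (by omega : K < m)]

section

variable {ι : Type*}

def imbalance (B : Finset ι) (y : ι → Bool) : ℝ := |2 * (#{i ∈ B | y i} : ℝ) - #B|

lemma exists_card_filter_ne_eq (B : Finset ι) (y : ι → Bool) :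
    ∃ b : Bool, (#{i ∈ B | b ≠ y i} : ℝ) = (#B - imbalance B y) / 2 := by
  have hsplit : (#{i ∈ B | y i} : ℝ) + #{i ∈ B | ¬ y i} = #B := by
    exact_mod_cast card_filter_add_card_filter_not (s := B) fun i => y i
  rcases le_total (#B : ℝ) (2 * #{i ∈ B | y i}) with hmaj | hmin
  · refine ⟨true, ?_⟩
    rw [imbalance, abs_of_nonneg (by linarith)]
    have : {i ∈ B | true ≠ y i} = {i ∈ B | ¬ y i} :=
      filter_congr fun i _ => by cases y i <;> simp
    rw [this]; linarith
  · refine ⟨false, ?_⟩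
    rw [imbalance, abs_of_nonpos (by linarith)]
    have : {i ∈ B | false ≠ y i} = {i ∈ B | y i} :=
      filter_congr fun i _ => by cases y i <;> simp
    rw [this]; linarith

variable [Fintype ι] [DecidableEq ι]

lemma sum_fun_bool_comp_card_filter (g : ℕ → ℝ) :
    ∑ τ : ι → Bool, g #{i | τ i} =
      ∑ j ∈ range (Fintype.card ι + 1), ((Fintype.card ι).choose j : ℝ) * g j := by
  let e : (ι → Bool) ≃ Finset ι :=
    { toFun τ := {i | τ i}, invFun S i := decide (i ∈ S),
      left_inv τ := by ext; simp, right_inv S := by ext; simp }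
  refine (e.sum_comp fun S => g #S).trans ?_
  rw [← powerset_univ, sum_powerset_apply_card]
  simp [nsmul_eq_mul]

lemma sum_abs_two_mul_card_filter_sub_card_ge :
    (2 : ℝ) ^ Fintype.card ι * √(Fintype.card ι / 2) ≤
      ∑ τ : ι → Bool, |2 * (#{i | τ i} : ℝ) - Fintype.card ι| := by
  rw [sum_fun_bool_comp_card_filter (fun j => |2 * (j : ℝ) - Fintype.card ι|)]
  rcases hK : Fintype.card ι with _ | K
  · simp
  push_cast
  have hzero := sum_range_choose_mul_sub_two_mul K (K + 1)
  rw [Nat.choose_succ_self, Nat.cast_zero, mul_zero] at hzero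
  -- `|x| + x ≥ 2x` below `K / 2` and `≥ 0` above it, while the terms `x` sum to zero.
  have hhalf : 2 * ((K + 1) * (K.choose (K / 2) : ℝ)) ≤
      ∑ j ∈ range (K + 1 + 1), ((K + 1).choose j : ℝ) * |2 * (j : ℝ) - (K + 1)| := by
    calc 2 * ((K + 1) * (K.choose (K / 2) : ℝ))
        = ∑ j ∈ range (K / 2 + 1), ((K + 1).choose j : ℝ) * (2 * (K + 1 - 2 * j)) := by
          rw [← sum_range_choose_mul_sub_two_mul, mul_sum]
          exact sum_congr rfl fun j _ => by ring
      _ ≤ ∑ j ∈ range (K / 2 + 1),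
            ((K + 1).choose j : ℝ) * (|2 * (j : ℝ) - (K + 1)| + (K + 1 - 2 * j)) := by
          gcongr with j
          rw [abs_sub_comm]; linarith [le_abs_self ((K : ℝ) + 1 - 2 * j)]
      _ ≤ ∑ j ∈ range (K + 1 + 1),
            ((K + 1).choose j : ℝ) * (|2 * (j : ℝ) - (K + 1)| + (K + 1 - 2 * j)) := by
          refine sum_le_sum_of_subset_of_nonneg (range_subset_range.mpr (by omega)) ?_
          intro j _ _
          rw [abs_sub_comm]
          exact mul_nonneg (Nat.cast_nonneg _) (by linarith [neg_abs_le ((K : ℝ) + 1 - 2 * j)])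
      _ = _ := by simp only [mul_add, sum_add_distrib, hzero, add_zero]
  have hbinom : (4 : ℝ) ^ (K + 1) ≤ 8 * (K + 1) * K.choose (K / 2) ^ 2 := by
    exact_mod_cast four_pow_le_choose_half_sq K
  refine le_trans ?_ hhalf
  rw [← Real.sqrt_sq (by positivity : (0 : ℝ) ≤ 2 ^ (K + 1)),
    ← Real.sqrt_mul (by positivity)]
  refine Real.sqrt_le_iff.mpr ⟨by positivity, ?_⟩
  have hsq : ((2 : ℝ) ^ (K + 1)) ^ 2 = 4 ^ (K + 1) := by
    rw [← pow_mul, mul_comm, pow_mul]; norm_num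
  rw [hsq]
  nlinarith

lemma sum_comp_restrict (B : Finset ι) (F : (B → Bool) → ℝ) :
    ∑ y : ι → Bool, F (fun i => y i) = 2 ^ #Bᶜ * ∑ u : B → Bool, F u := by
  rw [← (Equiv.piEquivPiSubtypeProd (· ∈ B) fun _ => Bool).symm.sum_comp,
    Fintype.sum_prod_type, sum_comm]
  simp [Fintype.card_subtype, filter_not, card_compl, card_univ_sdiff]

lemma sum_imbalance_ge (B : Finset ι) :
    (2 : ℝ) ^ Fintype.card ι * √(#B / 2) ≤ ∑ y : ι → Bool, imbalance B y := by
  have hcard (y : ι → Bool) : #{i ∈ B | y i} = #{i : B | y i} := by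
    rw [card_filter, card_filter]; exact (sum_coe_sort B fun i => if y i then 1 else 0).symm
  simp only [imbalance, hcard]
  rw [sum_comp_restrict B fun u => |2 * (#{i | u i} : ℝ) - #B|]
  have h := sum_abs_two_mul_card_filter_sub_card_ge (ι := B)
  rw [Fintype.card_coe] at h
  calc (2 : ℝ) ^ Fintype.card ι * √(#B / 2) = 2 ^ #Bᶜ * (2 ^ #B * √(#B / 2)) := by
        rw [← mul_assoc, ← pow_add, card_compl, Nat.sub_add_cancel (card_le_univ B)]
    _ ≤ _ := by gcongr

end

lemma sum_eq_card_div_two_of_add_comp_eq_one {Ω : Type*} [Fintype Ω] (e : Ω ≃ Ω)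
    (f : Ω → ℝ) (hf : ∀ ω, f ω + f (e ω) = 1) : ∑ ω, f ω = Fintype.card Ω / 2 := by
  have hsum : ∑ ω, (f ω + f (e ω)) = Fintype.card Ω := by simp [hf]
  rw [sum_add_distrib, e.sum_comp] at hsum
  linarith

lemma exists_forall_card_fiber_ge {X : Type*} {s : Finset X} (hs : s.Nonempty) (n : ℕ) :
    ∃ x : Fin n → X, (∀ t, x t ∈ s) ∧ ∀ a ∈ s, n / #s ≤ #{t | x t = a} := by
  have hd := hs.card_pos
  set e := s.equivFin
  refine ⟨fun t => e.symm ⟨t % #s, Nat.mod_lt _ hd⟩, fun t => (e.symm _).2, fun a ha => ?_⟩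
  set i := (e ⟨a, ha⟩ : ℕ)
  have hi : i < #s := (e ⟨a, ha⟩).2
  -- the `j`-th occurrence of `a` is at time `i + j * #s`
  have hlt (j : Fin (n / #s)) : i + j * #s < n := by
    have := Nat.div_mul_le_self n #s
    have := Nat.mul_le_mul_right #s (Nat.succ_le_of_lt j.2)
    nlinarith
  have hmaps (j : Fin (n / #s)) : e.symm ⟨(i + j * #s) % #s, Nat.mod_lt _ hd⟩ = a := by
    have hmod : (⟨(i + j * #s) % #s, Nat.mod_lt _ hd⟩ : Fin #s) = e ⟨a, ha⟩ :=
      Fin.ext ((Nat.add_mul_mod_self_right i j #s).trans (Nat.mod_eq_of_lt hi))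
    simp only [hmod, Equiv.symm_apply_apply]
  have hinj (j j' : Fin (n / #s)) (hjj' : i + j * #s = i + j' * #s) : j = j' :=
    Fin.ext (Nat.eq_of_mul_eq_mul_right hd (by omega))
  calc n / #s = #(univ : Finset (Fin (n / #s))) := by simp
    _ ≤ _ := card_le_card_of_injOn (fun j => ⟨i + j * #s, hlt j⟩)
          (fun j _ => mem_coe.mpr (mem_filter.mpr ⟨mem_univ _, hmaps j⟩))
          (fun j _ j' _ h => hinj j j' (congrArg Fin.val h))

section

variable {X : Type*} {n : ℕ}

lemma sum_expMistakes (A : (Fin n → X) → List Bool → ℝ) (x : Fin n → X) :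
    ∑ y : Fin n → Bool, expMistakes A x y = 2 ^ n * n / 2 := by
  simp only [expMistakes]
  rw [sum_comm]
  -- Flipping the label at time `t` leaves the learner's view before time `t` unchanged.
  have hflip (t : Fin n) :
      Function.Involutive fun y : Fin n → Bool => Function.update y t !(y t) := fun y => by simp
  have hpair (t : Fin n) := sum_eq_card_div_two_of_add_comp_eq_one (hflip t).toPerm
    (fun y => if y t then 1 - A x (List.ofFn fun i : Fin t.1 => y ⟨i.1, i.2.trans t.2⟩)
      else A x (List.ofFn fun i : Fin t.1 => y ⟨i.1, i.2.trans t.2⟩)) fun y => by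
    have hprefix (b : Bool) : (fun i : Fin t.1 => Function.update y t b ⟨i.1, i.2.trans t.2⟩) =
        fun i => y ⟨i.1, i.2.trans t.2⟩ :=
      funext fun i => Function.update_of_ne (Fin.ne_of_lt i.2) _ _
    cases hyt : y t <;> simp [hprefix, hyt]
  simp only [hpair, sum_const, card_univ, Fintype.card_fun, Fintype.card_bool, Fintype.card_fin]
  simp only [nsmul_eq_mul]; push_cast; ring

noncomputable def majorityVoteErrors (s : Finset X) (x : Fin n → X) (y : Fin n → Bool) : ℝ :=
  ∑ a ∈ s, (#{t | x t = a} - imbalance {t | x t = a} y) / 2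

lemma exists_mem_errCount_eq {H : Set (X → Bool)} {s : Finset X} (hH : Shatters H s)
    {x : Fin n → X} (hx : ∀ t, x t ∈ s) (y : Fin n → Bool) :
    ∃ h ∈ H, (errCount x y h : ℝ) = majorityVoteErrors s x y := by
  choose b hb using fun a => exists_card_filter_ne_eq {t | x t = a} y
  obtain ⟨h, hmem, hb'⟩ := hH b
  refine ⟨h, hmem, ?_⟩
  rw [errCount, majorityVoteErrors, card_eq_sum_card_fiberwise fun t _ => hx t]
  push_cast
  refine sum_congr rfl fun a ha => ?_
  rw [← hb, filter_filter]
  congr 2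
  ext t
  simp only [mem_filter, mem_univ, true_and]
  constructor
  · rintro ⟨hne, rfl⟩; exact ⟨rfl, hb' _ ha ▸ hne⟩
  · rintro ⟨rfl, hne⟩; exact ⟨hb' _ ha ▸ hne, rfl⟩

lemma sum_expMistakes_sub_majorityVoteErrors (A : (Fin n → X) → List Bool → ℝ)
    {s : Finset X} {x : Fin n → X} (hx : ∀ t, x t ∈ s) :
    ∑ y : Fin n → Bool, (expMistakes A x y - majorityVoteErrors s x y) =
      (∑ a ∈ s, ∑ y : Fin n → Bool, imbalance {t | x t = a} y) / 2 := by
  have hfibers : (n : ℝ) = ∑ a ∈ s, (#{t | x t = a} : ℝ) := by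
    have := card_eq_sum_card_fiberwise (s := univ) fun t _ => hx t
    simp only [card_univ, Fintype.card_fin] at this
    exact_mod_cast this
  rw [sum_sub_distrib, sum_expMistakes, sum_comm, hfibers]
  simp only [majorityVoteErrors, ← sum_div, sum_sub_distrib, sum_const, card_univ,
    Fintype.card_fun, Fintype.card_bool, Fintype.card_fin, nsmul_eq_mul, mul_sum]
  push_cast; ring

lemma le_sum_expMistakes_sub_majorityVoteErrors (A : (Fin n → X) → List Bool → ℝ)
    {s : Finset X} {x : Fin n → X} (hx : ∀ t, x t ∈ s) {k : ℕ}
    (hk : ∀ a ∈ s, k ≤ #{t | x t = a}) :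
    ∑ _y : Fin n → Bool, (#s : ℝ) * √(k / 2) / 2 ≤
      ∑ y : Fin n → Bool, (expMistakes A x y - majorityVoteErrors s x y) := by
  rw [sum_expMistakes_sub_majorityVoteErrors A hx, sum_const, card_univ, Fintype.card_fun,
    Fintype.card_bool, Fintype.card_fin, nsmul_eq_mul]
  calc ((2 ^ n : ℕ) : ℝ) * (#s * √(k / 2) / 2)
      = (∑ _a ∈ s, (2 : ℝ) ^ n * √(k / 2)) / 2 := by
        rw [sum_const, nsmul_eq_mul]; push_cast; ring
    _ ≤ (∑ a ∈ s, ∑ y : Fin n → Bool, imbalance {t | x t = a} y) / 2 := by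
        gcongr with a ha
        have hB := sum_imbalance_ge (ι := Fin n) {t | x t = a}
        rw [Fintype.card_fin] at hB
        refine le_trans ?_ hB
        gcongr
        exact_mod_cast hk a ha

end

theorem agnostic_transductive_lower_bound_general {X : Type*} (H : Set (X → Bool)) (d n : ℕ)
    (hVCge : ∃ s : Finset X, s.card = d ∧ Shatters H s)
    (hd : 0 < d) :
    ∀ A : (Fin n → X) → List Bool → ℝ,
      (∀ x l, 0 ≤ A x l ∧ A x l ≤ 1) →
      ∃ (x : Fin n → X) (y : Fin n → Bool), ∃ h ∈ H,
        (d : ℝ) * Real.sqrt ((n / d : ℕ) : ℝ) / (2 * Real.sqrt 2) ≤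
          expMistakes A x y - errCount x y h := by
  intro A _
  obtain ⟨s, rfl, hH⟩ := hVCge
  obtain ⟨x, hxs, hfiber⟩ := exists_forall_card_fiber_ge (card_pos.mp hd) n
  obtain ⟨y, -, hy⟩ :=
    exists_le_of_sum_le univ_nonempty (le_sum_expMistakes_sub_majorityVoteErrors A hxs hfiber)
  obtain ⟨h, hmem, herr⟩ := exists_mem_errCount_eq hH hxs y
  refine ⟨x, y, h, hmem, ?_⟩
  rw [herr]
  calc _ = (#s : ℝ) * √((n / #s : ℕ) / 2) / 2 := by rw [Real.sqrt_div' _ zero_le_two]; ring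
    _ ≤ _ := hy

/-- Agnostic transductive lower bound: if `0 < VC(H) = d < ∞` and `n ≥ d`, then every
(randomized) learner suffers regret at least `d·√(⌊n/d⌋)/(2√2) = Ω(√(dn))` on some
instance sequence and labeling. -/
theorem agnostic_transductive_lower_bound {X : Type*} (H : Set (X → Bool)) (d n : ℕ)
    (hVCge : ∃ s : Finset X, s.card = d ∧ Shatters H s)
    (hVCle : ∀ s : Finset X, Shatters H s → s.card ≤ d)
    (hd : 0 < d) (hdn : d ≤ n) :
    ∀ A : (Fin n → X) → List Bool → ℝ,
      (∀ x l, 0 ≤ A x l ∧ A x l ≤ 1) →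
      ∃ (x : Fin n → X) (y : Fin n → Bool), ∃ h ∈ H,
        (d : ℝ) * Real.sqrt ((n / d : ℕ) : ℝ) / (2 * Real.sqrt 2) ≤
          expMistakes A x y - errCount x y h :=
  agnostic_transductive_lower_bound_general H d n hVCge hd
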